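/- For an integer n ≥ 2, let R_{1,n} be the C*-algebra of continuous functions f : [0,1] → M_n(ℂ) such that f(0) = λ·(1_{n−1} ⊕ 0) and f(1) = λ·1_n for a single scalar λ ∈ ℂ (the same λ at both endpoints), and let B be the C*-algebra of continuous functions f : [0,1] → M_n(ℂ) such that f(1) = 0 and f(0) = 0_{n−1} ⊕ μ for some scalar μ ∈ ℂ. Then the minimal unitization of R_{1,n} is *-isomorphic to the minimal unitization of B. -/

import Mathlib

open Matrix

noncomputable section

/-- The diagonal `n × n` projection `1_{n−1} ⊕ 0` with `1` in the first `n − 1`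
diagonal entries. -/
def diagProj (n : ℕ) : Matrix (Fin n) (Fin n) ℂ :=
  Matrix.diagonal fun i => if (i : ℕ) < n - 1 then (1 : ℂ) else 0

/-- The diagonal `n × n` projection `0_{n−1} ⊕ 1` with `1` in the last diagonal entry. -/
def lastProj (n : ℕ) : Matrix (Fin n) (Fin n) ℂ :=
  Matrix.diagonal fun i => if (i : ℕ) = n - 1 then (1 : ℂ) else 0

lemma diagProj_mul_self (n : ℕ) : diagProj n * diagProj n = diagProj n := by
  have h : (fun i : Fin n => (if (i : ℕ) < n - 1 then (1 : ℂ) else 0) *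
      (if (i : ℕ) < n - 1 then (1 : ℂ) else 0)) =
      fun i : Fin n => if (i : ℕ) < n - 1 then (1 : ℂ) else 0 := by
    funext i; by_cases h : (i : ℕ) < n - 1 <;> simp [h]
  rw [diagProj, Matrix.diagonal_mul_diagonal, h]

lemma diagProj_star (n : ℕ) : star (diagProj n) = diagProj n := by
  have h : (star fun i : Fin n => if (i : ℕ) < n - 1 then (1 : ℂ) else 0) =
      fun i : Fin n => if (i : ℕ) < n - 1 then (1 : ℂ) else 0 := by
    funext i; by_cases h : (i : ℕ) < n - 1 <;> simp [h]
  rw [diagProj, Matrix.star_eq_conjTranspose, Matrix.diagonal_conjTranspose, h]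

lemma lastProj_mul_self (n : ℕ) : lastProj n * lastProj n = lastProj n := by
  have h : (fun i : Fin n => (if (i : ℕ) = n - 1 then (1 : ℂ) else 0) *
      (if (i : ℕ) = n - 1 then (1 : ℂ) else 0)) =
      fun i : Fin n => if (i : ℕ) = n - 1 then (1 : ℂ) else 0 := by
    funext i; by_cases h : (i : ℕ) = n - 1 <;> simp [h]
  rw [lastProj, Matrix.diagonal_mul_diagonal, h]

lemma lastProj_star (n : ℕ) : star (lastProj n) = lastProj n := by
  have h : (star fun i : Fin n => if (i : ℕ) = n - 1 then (1 : ℂ) else 0) =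
      fun i : Fin n => if (i : ℕ) = n - 1 then (1 : ℂ) else 0 := by
    funext i; by_cases h : (i : ℕ) = n - 1 <;> simp [h]
  rw [lastProj, Matrix.star_eq_conjTranspose, Matrix.diagonal_conjTranspose, h]

/-- Razak's building block `R_{1,n}`: continuous functions `f : [0,1] → M_n(ℂ)` with
`f 0 = λ·(1_{n−1} ⊕ 0)` and `f 1 = λ·1_n` for a single scalar `λ ∈ ℂ`. -/
def Razak (n : ℕ) :
    NonUnitalStarSubalgebra ℂ C(unitInterval, Matrix (Fin n) (Fin n) ℂ) where
  carrier := {f | ∃ lam : ℂ,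
    f 0 = lam • diagProj n ∧ f 1 = lam • (1 : Matrix (Fin n) (Fin n) ℂ)}
  add_mem' := by
    rintro f g ⟨l₁, h₁0, h₁1⟩ ⟨l₂, h₂0, h₂1⟩
    exact ⟨l₁ + l₂, by simp [h₁0, h₂0, add_smul], by simp [h₁1, h₂1, add_smul]⟩
  zero_mem' := ⟨0, by simp, by simp⟩
  mul_mem' := by
    rintro f g ⟨l₁, h₁0, h₁1⟩ ⟨l₂, h₂0, h₂1⟩
    refine ⟨l₁ * l₂, ?_, ?_⟩
    · rw [ContinuousMap.mul_apply, h₁0, h₂0, smul_mul_smul_comm, diagProj_mul_self]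
    · rw [ContinuousMap.mul_apply, h₁1, h₂1, smul_mul_smul_comm, one_mul]
  smul_mem' := by
    rintro c f ⟨l, h0, h1⟩
    exact ⟨c * l, by simp [h0, smul_smul], by simp [h1, smul_smul]⟩
  star_mem' := by
    rintro f ⟨l, h0, h1⟩
    refine ⟨star l, ?_, ?_⟩
    · rw [ContinuousMap.star_apply, h0, star_smul, diagProj_star]
    · rw [ContinuousMap.star_apply, h1, star_smul, star_one]

/-- The algebra `B` of continuous functions `f : [0,1] → M_n(ℂ)` with `f 1 = 0` and
`f 0 = 0_{n−1} ⊕ μ` for some `μ ∈ ℂ`. -/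
def Bn (n : ℕ) :
    NonUnitalStarSubalgebra ℂ C(unitInterval, Matrix (Fin n) (Fin n) ℂ) where
  carrier := {f | f 1 = 0 ∧ ∃ μ : ℂ, f 0 = μ • lastProj n}
  add_mem' := by
    rintro f g ⟨h₁1, μ₁, h₁0⟩ ⟨h₂1, μ₂, h₂0⟩
    exact ⟨by simp [h₁1, h₂1], μ₁ + μ₂, by simp [h₁0, h₂0, add_smul]⟩
  zero_mem' := ⟨by simp, 0, by simp⟩
  mul_mem' := by
    rintro f g ⟨h₁1, μ₁, h₁0⟩ ⟨h₂1, μ₂, h₂0⟩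
    refine ⟨by simp [h₁1, h₂1], μ₁ * μ₂, ?_⟩
    rw [ContinuousMap.mul_apply, h₁0, h₂0, smul_mul_smul_comm, lastProj_mul_self]
  smul_mem' := by
    rintro c f ⟨h1, μ, h0⟩
    exact ⟨by simp [h1], c * μ, by simp [h0, smul_smul]⟩
  star_mem' := by
    rintro f ⟨h1, μ, h0⟩
    refine ⟨by simp [h1], star μ, ?_⟩
    rw [ContinuousMap.star_apply, h0, star_smul, lastProj_star]

/-! Both unitizations are realised inside `C([0,1], Mₙ(ℂ))` as the unital ∗-algebra generated by
the respective ideal, since neither ideal contains `1`. These two ∗-algebras coincide: subtracting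
the constant `λ·1` turns an element of `R_{1,n}` into one of `B` (because
`(1_{n−1} ⊕ 0) − 1_n = −(0_{n−1} ⊕ 1)`), and subtracting `μ·1` turns an element of `B` into one
of `R_{1,n}`. -/

theorem StarAlgebra.adjoin_le_adjoin_of_forall_sub_algebraMap_mem {R A : Type*} [CommRing R]
    [StarRing R] [Ring A] [StarRing A] [Algebra R A] [StarModule R A] {s t : Set A}
    (h : ∀ x ∈ s, ∃ r : R, x - algebraMap R A r ∈ t) :
    StarAlgebra.adjoin R s ≤ StarAlgebra.adjoin R t := by
  refine StarAlgebra.adjoin_le fun x hx => ?_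
  obtain ⟨r, hr⟩ := h x hx
  rw [← sub_add_cancel x (algebraMap R A r)]
  exact add_mem (StarAlgebra.subset_adjoin R t hr) (algebraMap_mem _ r)

theorem NonUnitalStarSubalgebra.nonempty_unitization_starAlgEquiv_of_adjoin_eq {R A : Type*}
    [Field R] [StarRing R] [Ring A] [StarRing A] [Algebra R A] [StarModule R A]
    {s t : NonUnitalStarSubalgebra R A} (hs : (1 : A) ∉ s) (ht : (1 : A) ∉ t)
    (h : StarAlgebra.adjoin R (s : Set A) = StarAlgebra.adjoin R (t : Set A)) :
    Nonempty (Unitization R s ≃⋆ₐ[R] Unitization R t) := by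
  have e := unitizationStarAlgEquiv s hs
  rw [h] at e
  exact ⟨e.trans (unitizationStarAlgEquiv t ht).symm⟩

lemma diagProj_add_lastProj (n : ℕ) : diagProj n + lastProj n = 1 := by
  ext i j
  rcases eq_or_ne i j with rfl | hij
  · by_cases h : (i : ℕ) < n - 1
    · simp [diagProj, lastProj, h, show (i : ℕ) ≠ n - 1 by omega]
    · simp [diagProj, lastProj, show (i : ℕ) = n - 1 by omega]
  · simp [diagProj, lastProj, hij]

lemma diagProj_apply_last {n : ℕ} (hn : n ≠ 0) :
    diagProj n ⟨n - 1, by omega⟩ ⟨n - 1, by omega⟩ = 0 := by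
  simp [diagProj]

lemma one_notMem_razak {n : ℕ} (hn : n ≠ 0) :
    (1 : C(unitInterval, Matrix (Fin n) (Fin n) ℂ)) ∉ Razak n := by
  rintro ⟨l, h0, -⟩
  have := congrFun₂ h0 ⟨n - 1, by omega⟩ ⟨n - 1, by omega⟩
  simp [diagProj_apply_last hn] at this

lemma one_notMem_bn {n : ℕ} (hn : n ≠ 0) :
    (1 : C(unitInterval, Matrix (Fin n) (Fin n) ℂ)) ∉ Bn n := by
  have : NeZero n := ⟨hn⟩
  rintro ⟨h1, -⟩
  exact one_ne_zero h1

lemma exists_sub_algebraMap_mem_bn {n : ℕ} {f : C(unitInterval, Matrix (Fin n) (Fin n) ℂ)}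
    (hf : f ∈ Razak n) : ∃ r : ℂ, f - algebraMap ℂ _ r ∈ Bn n := by
  obtain ⟨l, h0, h1⟩ := hf
  refine ⟨l, by simp [h1, Algebra.algebraMap_eq_smul_one], -l, ?_⟩
  simp [h0, Algebra.algebraMap_eq_smul_one, ← diagProj_add_lastProj n, smul_add]

lemma exists_sub_algebraMap_mem_razak {n : ℕ} {f : C(unitInterval, Matrix (Fin n) (Fin n) ℂ)}
    (hf : f ∈ Bn n) : ∃ r : ℂ, f - algebraMap ℂ _ r ∈ Razak n := by
  obtain ⟨h1, μ, h0⟩ := hf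
  refine ⟨μ, -μ, ?_, by simp [h1, Algebra.algebraMap_eq_smul_one]⟩
  simp [h0, Algebra.algebraMap_eq_smul_one, ← diagProj_add_lastProj n, smul_add]

lemma adjoin_razak_eq_adjoin_bn (n : ℕ) :
    StarAlgebra.adjoin ℂ (Razak n : Set C(unitInterval, Matrix (Fin n) (Fin n) ℂ)) =
      StarAlgebra.adjoin ℂ (Bn n : Set C(unitInterval, Matrix (Fin n) (Fin n) ℂ)) :=
  le_antisymm
    (StarAlgebra.adjoin_le_adjoin_of_forall_sub_algebraMap_mem
      fun _ hf => exists_sub_algebraMap_mem_bn hf)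
    (StarAlgebra.adjoin_le_adjoin_of_forall_sub_algebraMap_mem
      fun _ hf => exists_sub_algebraMap_mem_razak hf)

/-- The minimal unitization of Razak's building block `R_{1,n}` is ∗-isomorphic to the
minimal unitization of `B = {f ∈ C([0,1], Mₙ(ℂ)) : f 1 = 0, f 0 ∈ ℂ·E_{nn}}`. -/
theorem unitization_razak_iso (n : ℕ) (hn : 2 ≤ n) :
    Nonempty (Unitization ℂ (Razak n) ≃⋆ₐ[ℂ] Unitization ℂ (Bn n)) :=
  NonUnitalStarSubalgebra.nonempty_unitization_starAlgEquiv_of_adjoin_eq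
    (one_notMem_razak (by omega)) (one_notMem_bn (by omega)) (adjoin_razak_eq_adjoin_bn n)
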